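/- arXiv:1303.6397 — 2 statements merged into one kernel-verified Lean document; each statement's English description precedes it below -/
import Mathlib

section
/- Suppose 1_N ∈ Ker L and the pair ([C̄', (L⊗H)']', I_N ⊗ A) is detectable. Then for every i = 1,...,N, the unobservable subspace of (H,A) intersects the undetectable subspace of (C_i,A) trivially: O_H^u ∩ C_i^u = {0}. -/
/-!
Apply detectability to `x = e_i ⊗ v`. By Cayley–Hamilton, `H A^l v = 0` and `C_i A^l v = 0` hold for
every `l`, not only `l < n`. Since `(I ⊗ A)^l x = e_i ⊗ A^l v`, the block `C̄` sees only `C_i A^l v = 0`,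
`(L ⊗ H)(e_i ⊗ A^l v) = L e_i ⊗ H A^l v = 0`, and `α⁺(I ⊗ A) x = e_i ⊗ α⁺(A) v = 0`. Hence `x = 0`,
so `v = 0`.
-/

open Matrix Kronecker Polynomial

/-- Block diagonal matrix `C̄ = diag[C_1, …, C_N]`. -/
def Cbar {N n : ℕ} (m : Fin N → ℕ) (C : ∀ i, Matrix (Fin (m i)) (Fin n) ℝ) :
    Matrix ((i : Fin N) × Fin (m i)) (Fin N × Fin n) ℝ :=
  Matrix.of fun p q => if p.1 = q.1 then C p.1 p.2 q.2 else 0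

namespace Matrix

variable {ι κ R : Type*} [Fintype ι] [DecidableEq ι] [CommRing R]

theorem mul_pow_mulVec_eq_zero_of_forall_lt_card [Nontrivial R] {A : Matrix ι ι R}
    {M : Matrix κ ι R} {v : ι → R} (h : ∀ l < Fintype.card ι, (M * A ^ l) *ᵥ v = 0) (l : ℕ) :
    (M * A ^ l) *ᵥ v = 0 := by
  rcases (Fintype.card ι).eq_zero_or_pos with hι | hι
  · have : IsEmpty ι := Fintype.card_eq_zero_iff.mp hι
    rw [Subsingleton.elim v 0, mulVec_zero]
  have hdeg : (X ^ l %ₘ A.charpoly).natDegree < Fintype.card ι := by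
    rw [← A.charpoly_natDegree_eq_dim]
    refine natDegree_modByMonic_lt _ A.charpoly_monic fun h1 => hι.ne' ?_
    rw [← A.charpoly_natDegree_eq_dim, h1, natDegree_one]
  rw [pow_eq_aeval_mod_charpoly, aeval_eq_sum_range' hdeg, Matrix.mul_sum, sum_mulVec]
  refine Finset.sum_eq_zero fun j hj => ?_
  rw [Matrix.mul_smul, smul_mulVec, h j (Finset.mem_range.mp hj), smul_zero]

variable [Fintype κ] [DecidableEq κ]

theorem aeval_one_kronecker (A : Matrix ι ι R) (q : R[X]) :
    aeval ((1 : Matrix κ κ R) ⊗ₖ A) q = 1 ⊗ₖ aeval A q := by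
  let f : Matrix ι ι R →ₐ[R] Matrix (κ × ι) (κ × ι) R :=
    AlgHom.ofLinearMap (kroneckerBilinear (R := R) (α := R) 1) one_kronecker_one fun B B' => by
      simp [kroneckerBilinear, ← mul_kronecker_mul]
  exact aeval_algHom_apply f A q

theorem one_kronecker_pow (A : Matrix ι ι R) (l : ℕ) :
    ((1 : Matrix κ κ R) ⊗ₖ A) ^ l = 1 ⊗ₖ (A ^ l) := by
  simpa using aeval_one_kronecker (κ := κ) A (X ^ l)

end Matrix

theorem Cbar_mulVec_vec {N n : ℕ} (m : Fin N → ℕ) (C : ∀ i, Matrix (Fin (m i)) (Fin n) ℝ)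
    (X : Matrix (Fin n) (Fin N) ℝ) (p : (i : Fin N) × Fin (m i)) :
    (Cbar m C *ᵥ vec X) p = (C p.1 * X) p.2 p.1 := by
  simp [Cbar, mulVec, dotProduct, Fintype.sum_prod_type, mul_apply]

theorem Cbar_mulVec_vec_mul_vecMulVec_single {N n : ℕ} (m : Fin N → ℕ)
    (C : ∀ i, Matrix (Fin (m i)) (Fin n) ℝ) (B : Matrix (Fin n) (Fin n) ℝ) {i : Fin N}
    {v : Fin n → ℝ} (h : (C i * B) *ᵥ v = 0) :
    Cbar m C *ᵥ vec (B * vecMulVec v (Pi.single i 1)) = 0 := by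
  funext ⟨j, r⟩
  rw [Cbar_mulVec_vec, ← Matrix.mul_assoc, mul_vecMulVec, vecMulVec_apply]
  rcases eq_or_ne j i with rfl | hj
  · simp [h]
  · simp [hj]

theorem unobs_inter_undet_trivial_of_detectable_general {n N mH : ℕ}
    (A : Matrix (Fin n) (Fin n) ℝ)
    (m : Fin N → ℕ) (C : ∀ i, Matrix (Fin (m i)) (Fin n) ℝ)
    (H : Matrix (Fin mH) (Fin n) ℝ) (L : Matrix (Fin N) (Fin N) ℝ)
    (aplus : Polynomial ℝ)
    (hdet : ∀ x : Fin N × Fin n → ℝ,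
      (∀ l < n * N,
          (Cbar m C * ((1 : Matrix (Fin N) (Fin N) ℝ) ⊗ₖ A) ^ l).mulVec x = 0 ∧
          ((L ⊗ₖ H) * ((1 : Matrix (Fin N) (Fin N) ℝ) ⊗ₖ A) ^ l).mulVec x = 0) →
      (aeval ((1 : Matrix (Fin N) (Fin N) ℝ) ⊗ₖ A) aplus).mulVec x = 0 →
      x = 0) :
    ∀ (i : Fin N) (v : Fin n → ℝ),
      (∀ l < n, (H * A ^ l).mulVec v = 0) →
      (∀ l < n, (C i * A ^ l).mulVec v = 0) → (aeval A aplus).mulVec v = 0 →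
      v = 0 := by
  intro i v hH hC hplus
  have hHl : ∀ l, (H * A ^ l) *ᵥ v = 0 :=
    mul_pow_mulVec_eq_zero_of_forall_lt_card (by rwa [Fintype.card_fin])
  have hCl : ∀ l, (C i * A ^ l) *ᵥ v = 0 :=
    mul_pow_mulVec_eq_zero_of_forall_lt_card (by rwa [Fintype.card_fin])
  -- `e_i ⊗ v` is `vec` of the matrix whose only nonzero column is `v`, in position `i`.
  have hzero : vec (vecMulVec v (Pi.single i (1 : ℝ))) = 0 := by
    refine hdet _ (fun l _ => ⟨?_, ?_⟩) ?_
    · rw [← mulVec_mulVec, one_kronecker_pow, ← vec_mul_eq_mulVec]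
      exact Cbar_mulVec_vec_mul_vecMulVec_single m C _ (hCl l)
    · rw [← mulVec_mulVec, one_kronecker_pow, ← vec_mul_eq_mulVec, kronecker_mulVec_vec,
        ← Matrix.mul_assoc, mul_vecMulVec, hHl, zero_vecMulVec, Matrix.zero_mul,
        vec_zero]
    · rw [aeval_one_kronecker, ← vec_mul_eq_mulVec, mul_vecMulVec, hplus, zero_vecMulVec, vec_zero]
  funext k
  simpa [vecMulVec_apply] using congrFun hzero (i, k)

/-- Theorem 1(ii): if `1_N ∈ Ker L` and the pair `([C̄', (L⊗H)']', I_N ⊗ A)` is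
detectable, then for every `i` the unobservable subspace of `(H,A)` intersects
the undetectable subspace of `(C_i,A)` trivially: `O_Hᵘ ∩ C_iᵘ = {0}`. -/
theorem unobs_inter_undet_trivial_of_detectable {n N mH : ℕ} (hN : 0 < N)
    (A : Matrix (Fin n) (Fin n) ℝ)
    (m : Fin N → ℕ) (C : ∀ i, Matrix (Fin (m i)) (Fin n) ℝ)
    (H : Matrix (Fin mH) (Fin n) ℝ) (L : Matrix (Fin N) (Fin N) ℝ)
    (aminus aplus : Polynomial ℝ)
    (hmonicm : aminus.Monic) (hmonicp : aplus.Monic)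
    (hfact : minpoly ℝ A = aminus * aplus)
    (hminus : ∀ μ ∈ (aminus.map (algebraMap ℝ ℂ)).roots, μ.re < 0)
    (hplus : ∀ μ ∈ (aplus.map (algebraMap ℝ ℂ)).roots, 0 ≤ μ.re)
    (hone : L.mulVec (fun _ => 1) = 0)
    (hdet : ∀ x : Fin N × Fin n → ℝ,
      (∀ l < n * N,
          (Cbar m C * ((1 : Matrix (Fin N) (Fin N) ℝ) ⊗ₖ A) ^ l).mulVec x = 0 ∧
          ((L ⊗ₖ H) * ((1 : Matrix (Fin N) (Fin N) ℝ) ⊗ₖ A) ^ l).mulVec x = 0) →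
      (aeval ((1 : Matrix (Fin N) (Fin N) ℝ) ⊗ₖ A) aplus).mulVec x = 0 →
      x = 0) :
    ∀ (i : Fin N) (v : Fin n → ℝ),
      (∀ l < n, (H * A ^ l).mulVec v = 0) →
      (∀ l < n, (C i * A ^ l).mulVec v = 0) → (aeval A aplus).mulVec v = 0 →
      v = 0 :=
  unobs_inter_undet_trivial_of_detectable_general A m C H L aplus hdet
end

section
/- Suppose (H,A) is observable (so O_H^u = {0}), L is a Laplacian with Ker L = span{1_N}, and ⋂_{i=1}^N C_i^u = {0}. Then the pair ([C̄', (L⊗H)']', I_N ⊗ A) is detectable. -/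
open Matrix Kronecker Polynomial

lemma one_kron_pow {N n : ℕ} (A : Matrix (Fin n) (Fin n) ℝ) (l : ℕ) :
    ((1 : Matrix (Fin N) (Fin N) ℝ) ⊗ₖ A) ^ l = 1 ⊗ₖ (A ^ l) := by
  induction l with
  | zero => simp [Matrix.one_kronecker_one]
  | succ l ih => rw [pow_succ, ih, ← Matrix.mul_kronecker_mul, one_mul, ← pow_succ]

lemma aeval_one_kron {N n : ℕ} (A : Matrix (Fin n) (Fin n) ℝ) (p : Polynomial ℝ) :
    aeval ((1 : Matrix (Fin N) (Fin N) ℝ) ⊗ₖ A) p = 1 ⊗ₖ aeval A p := by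
  induction p using Polynomial.induction_on' with
  | add p q hp hq => rw [map_add, map_add, hp, hq, Matrix.kronecker_add]
  | monomial k c =>
      rw [Polynomial.aeval_monomial, Polynomial.aeval_monomial, one_kron_pow,
        Algebra.algebraMap_eq_smul_one, Algebra.algebraMap_eq_smul_one,
        smul_mul_assoc, smul_mul_assoc, one_mul, one_mul, Matrix.kronecker_smul]

lemma kron_mulVec {N n mH : ℕ} (B : Matrix (Fin N) (Fin N) ℝ)
    (M : Matrix (Fin mH) (Fin n) ℝ) (x : Fin N × Fin n → ℝ) (i : Fin N) (p : Fin mH) :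
    ((B ⊗ₖ M).mulVec x) (i, p) = ∑ j, B i j * (M.mulVec fun q => x (j, q)) p := by
  simp [Matrix.mulVec, dotProduct, Fintype.sum_prod_type, Finset.mul_sum, mul_assoc]

lemma one_kron_mulVec {N n mH : ℕ}
    (M : Matrix (Fin mH) (Fin n) ℝ) (x : Fin N × Fin n → ℝ) (i : Fin N) (p : Fin mH) :
    (((1 : Matrix (Fin N) (Fin N) ℝ) ⊗ₖ M).mulVec x) (i, p)
      = (M.mulVec fun q => x (i, q)) p := by
  rw [kron_mulVec]
  simp [Matrix.one_apply]

lemma Cbar_mulVec {N n : ℕ} (m : Fin N → ℕ) (C : ∀ i, Matrix (Fin (m i)) (Fin n) ℝ)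
    (y : Fin N × Fin n → ℝ) (i : Fin N) (p : Fin (m i)) :
    ((Cbar m C).mulVec y) ⟨i, p⟩ = ((C i).mulVec fun q => y (i, q)) p := by
  simp [Cbar, Matrix.mulVec, dotProduct, Fintype.sum_prod_type]

lemma Cbar_mul_kron_mulVec {N n : ℕ} (m : Fin N → ℕ)
    (C : ∀ i, Matrix (Fin (m i)) (Fin n) ℝ) (M : Matrix (Fin n) (Fin n) ℝ)
    (x : Fin N × Fin n → ℝ) (i : Fin N) (p : Fin (m i)) :
    ((Cbar m C * ((1 : Matrix (Fin N) (Fin N) ℝ) ⊗ₖ M)).mulVec x) ⟨i, p⟩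
      = ((C i * M).mulVec fun q => x (i, q)) p := by
  have h : (fun q => (((1 : Matrix (Fin N) (Fin N) ℝ) ⊗ₖ M).mulVec x) (i, q))
      = M.mulVec (fun q => x (i, q)) := by
    funext q; exact one_kron_mulVec M x i q
  rw [← Matrix.mulVec_mulVec, Cbar_mulVec, h, Matrix.mulVec_mulVec]

lemma L_kron_mulVec {N n mH : ℕ} (L : Matrix (Fin N) (Fin N) ℝ)
    (H : Matrix (Fin mH) (Fin n) ℝ) (M : Matrix (Fin n) (Fin n) ℝ)
    (x : Fin N × Fin n → ℝ) (i : Fin N) (p : Fin mH) :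
    (((L ⊗ₖ H) * ((1 : Matrix (Fin N) (Fin N) ℝ) ⊗ₖ M)).mulVec x) (i, p)
      = ∑ j, L i j * ((H * M).mulVec fun q => x (j, q)) p := by
  rw [← Matrix.mul_kronecker_mul, mul_one, kron_mulVec]

/-- Corollary 1: if `(H,A)` is observable, `Ker L = span{1_N}` and
`⋂_{i=1}^N C_iᵘ = {0}`, then the pair `([C̄', (L⊗H)']', I_N ⊗ A)` is detectable. -/
theorem detectable_of_observable_and_spanning_tree {n N mH : ℕ} (hN : 0 < N)
    (A : Matrix (Fin n) (Fin n) ℝ)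
    (m : Fin N → ℕ) (C : ∀ i, Matrix (Fin (m i)) (Fin n) ℝ)
    (H : Matrix (Fin mH) (Fin n) ℝ) (L : Matrix (Fin N) (Fin N) ℝ)
    (aminus aplus : Polynomial ℝ)
    (hmonicm : aminus.Monic) (hmonicp : aplus.Monic)
    (hfact : minpoly ℝ A = aminus * aplus)
    (hminus : ∀ μ ∈ (aminus.map (algebraMap ℝ ℂ)).roots, μ.re < 0)
    (hplus : ∀ μ ∈ (aplus.map (algebraMap ℝ ℂ)).roots, 0 ≤ μ.re)
    (hObs : ∀ v : Fin n → ℝ, (∀ l < n, (H * A ^ l).mulVec v = 0) → v = 0)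
    (hKerL : ∀ b : Fin N → ℝ, L.mulVec b = 0 ↔ ∃ c : ℝ, b = fun _ => c)
    (hi : ∀ v : Fin n → ℝ,
      (∀ i : Fin N,
        (∀ l < n, (C i * A ^ l).mulVec v = 0) ∧ (aeval A aplus).mulVec v = 0) →
      v = 0) :
    ∀ x : Fin N × Fin n → ℝ,
      (∀ l < n * N,
          (Cbar m C * ((1 : Matrix (Fin N) (Fin N) ℝ) ⊗ₖ A) ^ l).mulVec x = 0 ∧
          ((L ⊗ₖ H) * ((1 : Matrix (Fin N) (Fin N) ℝ) ⊗ₖ A) ^ l).mulVec x = 0) →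
      (aeval ((1 : Matrix (Fin N) (Fin N) ℝ) ⊗ₖ A) aplus).mulVec x = 0 →
      x = 0 := by
  intro x hx hpx
  rcases Nat.eq_zero_or_pos n with hn | hn
  · subst hn
    funext q
    exact q.2.elim0
  set v : Fin N → Fin n → ℝ := fun i q => x (i, q) with hv
  -- each block: C_i A^l v_i = 0 for l < n
  have hC : ∀ i : Fin N, ∀ l < n, (C i * A ^ l).mulVec (v i) = 0 := by
    intro i l hl
    have hln : l < n * N := lt_of_lt_of_le hl (Nat.le_mul_of_pos_right n hN)
    have h1 := (hx l hln).1
    funext p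
    have h2 := congrFun h1 ⟨i, p⟩
    rwa [one_kron_pow, Cbar_mul_kron_mulVec] at h2
  -- the columns H A^l v_j are independent of j
  have hHj : ∀ l < n, ∀ j k : Fin N,
      (H * A ^ l).mulVec (v j) = (H * A ^ l).mulVec (v k) := by
    intro l hl j k
    have hln : l < n * N := lt_of_lt_of_le hl (Nat.le_mul_of_pos_right n hN)
    have h2 := (hx l hln).2
    funext p
    set b : Fin N → ℝ := fun j => ((H * A ^ l).mulVec (v j)) p with hb
    have hLb : L.mulVec b = 0 := by
      funext i
      have h3 := congrFun h2 (i, p)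
      rw [one_kron_pow, L_kron_mulVec] at h3
      simpa [Matrix.mulVec, dotProduct, hb] using h3
    obtain ⟨c, hc⟩ := (hKerL b).mp hLb
    have : b j = b k := by rw [hc]
    exact this
  -- hence all v_j equal
  have hveq : ∀ j k : Fin N, v j = v k := by
    intro j k
    have h0 : v j - v k = 0 := by
      apply hObs
      intro l hl
      rw [Matrix.mulVec_sub, hHj l hl j k, sub_self]
    funext q
    have := congrFun h0 q
    simpa [sub_eq_zero] using this
  -- aeval condition componentwise
  have hpv : ∀ i : Fin N, (aeval A aplus).mulVec (v i) = 0 := by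
    intro i
    funext p
    have h4 := congrFun hpx (i, p)
    rw [aeval_one_kron, one_kron_mulVec] at h4
    exact h4
  -- apply the intersection hypothesis to the common value
  set i0 : Fin N := ⟨0, hN⟩
  have hvz : v i0 = 0 := by
    apply hi
    intro i
    refine ⟨fun l hl => ?_, ?_⟩
    · rw [hveq i0 i]; exact hC i l hl
    · rw [hveq i0 i]; exact hpv i
  funext q
  obtain ⟨i, p⟩ := q
  have h5 : v i p = 0 := by rw [hveq i i0, hvz]; rfl
  exact h5
end
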